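/- arXiv:0709.2056 — 3 statements merged into one kernel-verified Lean document; each statement's English description precedes it below -/
import Mathlib

section
/- Let u : ℝ² → ℝ² be continuous on the closed unit disk D̄. Then the following are equivalent: (i) there is a function s : (0,1] → ℝ with u(x) = s(‖x‖)·x^⊥ for all x ∈ D̄ \ {0} and u(0) = 0; (ii) for every unit vector ω ∈ S¹ and every x ∈ D̄ one has u(Φ_ω x) = −Φ_ω u(x), where Φ_ω denotes the orthogonal reflection of ℝ² across the line spanned by ω (so Φ_ω(aω + bJω) = aω − bJω, with J rotation by 90°). -/
open Metric Set MeasureTheory Filter Real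
open scoped RealInnerProductSpace MeasureTheory

noncomputable section

/-- The plane `ℝ²`, as a Euclidean space. -/
abbrev E2 := EuclideanSpace ℝ (Fin 2)

/-- Counterclockwise rotation of `x` by `90°`:  `x^⊥ = (-x₂, x₁)`. -/
def perp (x : E2) : E2 := WithLp.toLp 2 ![-(x 1), x 0]

/-- The orthogonal reflection of the plane across the line spanned by the unit vector `ω`:
it fixes `ℝω` and negates `(ℝω)^⊥`, i.e. `Φ_ω x = 2⟪x,ω⟫ ω - x`. -/
def reflect (ω x : E2) : E2 := (2 * ⟪x, ω⟫) • ω - x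

/-!
Reflections preserve norms and anticommute with the rotation `x ↦ x^⊥`, which gives the forward
direction. Conversely, the reflection across `ℝx` fixes `x`, so the symmetry at `x` forces
`u x ⟂ x`, i.e. `u x = c • x^⊥`; and since reflections act transitively on each circle
`‖x‖ = r` and anticommute with `⊥`, the coefficient `c` is the same all over that circle.
-/

namespace E2

lemma inner_eq (x y : E2) : ⟪x, y⟫ = x 0 * y 0 + x 1 * y 1 := by
  simp [PiLp.inner_apply, Fin.sum_univ_two, RCLike.inner_apply]; ring

lemma norm_sq_eq (x : E2) : ‖x‖ ^ 2 = x 0 ^ 2 + x 1 ^ 2 := by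
  rw [← real_inner_self_eq_norm_sq, inner_eq]; ring

lemma ext_fin_two {x y : E2} (h0 : x 0 = y 0) (h1 : x 1 = y 1) : x = y := by
  ext i; fin_cases i <;> assumption

end E2

@[simp] lemma perp_apply_zero (x : E2) : perp x 0 = -(x 1) := rfl

@[simp] lemma perp_apply_one (x : E2) : perp x 1 = x 0 := rfl

lemma norm_perp (x : E2) : ‖perp x‖ = ‖x‖ := by
  have h : ‖perp x‖ ^ 2 = ‖x‖ ^ 2 := by
    rw [E2.norm_sq_eq, E2.norm_sq_eq, perp_apply_zero, perp_apply_one]; ring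
  exact (pow_left_inj₀ (norm_nonneg _) (norm_nonneg _) two_ne_zero).1 h

lemma inner_perp_self (x : E2) : ⟪perp x, x⟫ = 0 := by
  rw [E2.inner_eq, perp_apply_zero, perp_apply_one]; ring

lemma eq_smul_perp_of_inner_eq_zero {v x : E2} (hx : x ≠ 0) (h : ⟪v, x⟫ = 0) :
    v = (⟪v, perp x⟫ / ‖x‖ ^ 2) • perp x := by
  have hn : x 0 ^ 2 + x 1 ^ 2 ≠ 0 := by rw [← E2.norm_sq_eq]; positivity
  rw [E2.inner_eq] at h
  apply E2.ext_fin_two <;>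
    simp only [PiLp.smul_apply, smul_eq_mul, perp_apply_zero, perp_apply_one, E2.inner_eq,
      E2.norm_sq_eq] <;>
    field_simp
  · linear_combination (x 0) * h
  · linear_combination (x 1) * h

section Reflect

variable (ω : E2)

lemma reflect_apply (x : E2) (i : Fin 2) :
    reflect ω x i = 2 * (x 0 * ω 0 + x 1 * ω 1) * ω i - x i := by
  simp [reflect, E2.inner_eq]

lemma reflect_smul (r : ℝ) (x : E2) : reflect ω (r • x) = r • reflect ω x := by
  simp only [reflect, real_inner_smul_left, smul_sub, smul_smul]; ring_nf

@[simp] lemma reflect_zero : reflect ω 0 = 0 := by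
  simpa using reflect_smul ω 0 0

variable {ω}

lemma reflect_self (hω : ‖ω‖ = 1) : reflect ω ω = ω := by
  rw [reflect, real_inner_self_eq_norm_sq, hω]; module

lemma norm_reflect (hω : ‖ω‖ = 1) (x : E2) : ‖reflect ω x‖ = ‖x‖ := by
  have hω2 : ω 0 ^ 2 + ω 1 ^ 2 = 1 := by rw [← E2.norm_sq_eq, hω, one_pow]
  have h : ‖reflect ω x‖ ^ 2 = ‖x‖ ^ 2 := by
    rw [E2.norm_sq_eq, E2.norm_sq_eq, reflect_apply, reflect_apply]
    linear_combination (4 * (x 0 * ω 0 + x 1 * ω 1) ^ 2) * hω2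
  exact (pow_left_inj₀ (norm_nonneg _) (norm_nonneg _) two_ne_zero).1 h

lemma reflect_perp (hω : ‖ω‖ = 1) (x : E2) : reflect ω (perp x) = -perp (reflect ω x) := by
  have hω2 : ω 0 ^ 2 + ω 1 ^ 2 = 1 := by rw [← E2.norm_sq_eq, hω, one_pow]
  apply E2.ext_fin_two <;> simp only [PiLp.neg_apply, reflect_apply, perp_apply_zero,
    perp_apply_one]
  · linear_combination (-2 * x 1) * hω2
  · linear_combination (2 * x 0) * hω2

lemma neg_reflect_eq_self_iff (hω : ω ≠ 0) (v : E2) : -reflect ω v = v ↔ ⟪v, ω⟫ = 0 := by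
  simp [reflect, sub_eq_add_neg, hω]

end Reflect

lemma reflect_normalize_self {x : E2} (hx : x ≠ 0) : reflect (‖x‖⁻¹ • x) x = x := by
  have hω : ‖‖x‖⁻¹ • x‖ = 1 := norm_smul_inv_norm (𝕜 := ℝ) hx
  have hxω : ‖x‖ • (‖x‖⁻¹ • x) = x := smul_inv_smul₀ (norm_ne_zero_iff.mpr hx) x
  calc reflect (‖x‖⁻¹ • x) x = reflect (‖x‖⁻¹ • x) (‖x‖ • (‖x‖⁻¹ • x)) := by rw [hxω]
    _ = x := by rw [reflect_smul, reflect_self hω, hxω]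

lemma exists_reflect_eq {x y : E2} (hx : x ≠ 0) (hxy : ‖x‖ = ‖y‖) :
    ∃ ω : E2, ‖ω‖ = 1 ∧ reflect ω x = y := by
  by_cases hsum : x + y = 0
  · have hpx : perp x ≠ 0 := by rwa [← norm_ne_zero_iff, norm_perp, norm_ne_zero_iff]
    refine ⟨‖perp x‖⁻¹ • perp x, norm_smul_inv_norm (𝕜 := ℝ) hpx, ?_⟩
    rw [reflect, real_inner_smul_right, real_inner_comm, inner_perp_self,
      eq_neg_of_add_eq_zero_right hsum]
    simp
  · refine ⟨‖x + y‖⁻¹ • (x + y), norm_smul_inv_norm (𝕜 := ℝ) hsum, ?_⟩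
    -- `‖x‖ = ‖y‖` makes `2⟪x, x + y⟫ = ‖x + y‖²`
    have h2 : 2 * ⟪x, x + y⟫ = ‖x + y‖ ^ 2 := by
      rw [inner_add_right, real_inner_self_eq_norm_sq, norm_add_sq_real, hxy]; ring
    have hn : ‖x + y‖ ≠ 0 := norm_ne_zero_iff.mpr hsum
    rw [reflect, real_inner_smul_right, smul_smul,
      show 2 * (‖x + y‖⁻¹ * ⟪x, x + y⟫) * ‖x + y‖⁻¹ = 1 by field_simp; linarith,
      one_smul, add_sub_cancel_left]

def IsReflectionAntiequivariant (u : E2 → E2) : Prop :=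
  ∀ ω : E2, ‖ω‖ = 1 → ∀ x ∈ closedBall (0 : E2) 1, u (reflect ω x) = -reflect ω (u x)

lemma isReflectionAntiequivariant_of_eq_smul_perp {u : E2 → E2} {s : ℝ → ℝ}
    (hs : ∀ x ∈ closedBall (0 : E2) 1 \ {0}, u x = s ‖x‖ • perp x) (h0 : u 0 = 0) :
    IsReflectionAntiequivariant u := by
  intro ω hω x hx
  rcases eq_or_ne x 0 with rfl | hx0
  · simp [h0]
  have hrx : reflect ω x ∈ closedBall (0 : E2) 1 \ {0} := by
    refine ⟨by rwa [mem_closedBall_zero_iff, norm_reflect hω, ← mem_closedBall_zero_iff], ?_⟩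
    rwa [mem_singleton_iff, ← norm_eq_zero, norm_reflect hω, norm_eq_zero]
  rw [hs _ hrx, norm_reflect hω, hs x ⟨hx, hx0⟩, reflect_smul, reflect_perp hω, smul_neg,
    neg_neg]

namespace IsReflectionAntiequivariant

variable {u : E2 → E2} (H : IsReflectionAntiequivariant u)
include H

lemma map_zero : u 0 = 0 := by
  by_contra hu
  have h := H (‖u 0‖⁻¹ • u 0) (norm_smul_inv_norm (𝕜 := ℝ) hu) 0 (mem_closedBall_self zero_le_one)
  rw [reflect_zero, reflect_normalize_self hu, eq_neg_iff_add_eq_zero, ← two_smul ℝ,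
    smul_eq_zero_iff_right two_ne_zero] at h
  exact hu h

lemma eq_smul_perp {x : E2} (hx : x ∈ closedBall (0 : E2) 1) (hx0 : x ≠ 0) :
    u x = (⟪u x, perp x⟫ / ‖x‖ ^ 2) • perp x := by
  have h := H (‖x‖⁻¹ • x) (norm_smul_inv_norm (𝕜 := ℝ) hx0) x hx
  rw [reflect_normalize_self hx0, eq_comm, neg_reflect_eq_self_iff (by simp [hx0]),
    real_inner_smul_right, mul_eq_zero] at h
  exact eq_smul_perp_of_inner_eq_zero hx0 <| h.resolve_left (by simpa using hx0)

end IsReflectionAntiequivariant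

theorem stmt2_general (u : E2 → E2) :
    ((∃ s : ℝ → ℝ, ∀ x ∈ closedBall (0:E2) 1 \ {0}, u x = s ‖x‖ • perp x) ∧ u 0 = 0)
      ↔ (∀ ω : E2, ‖ω‖ = 1 → ∀ x ∈ closedBall (0:E2) 1,
          u (reflect ω x) = - reflect ω (u x)) := by
  refine ⟨fun ⟨⟨s, hs⟩, h0⟩ => isReflectionAntiequivariant_of_eq_smul_perp hs h0,
    fun (H : IsReflectionAntiequivariant u) => ?_⟩
  set e : E2 := EuclideanSpace.single 0 1
  refine ⟨⟨fun r => ⟪u (r • e), perp (r • e)⟫ / r ^ 2, ?_⟩, H.map_zero⟩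
  rintro x ⟨hx, hx0 : x ≠ 0⟩
  set y := ‖x‖ • e
  have hy : ‖y‖ = ‖x‖ := by simp [y, e, norm_smul]
  have hy0 : y ≠ 0 := by rwa [← norm_ne_zero_iff, hy, norm_ne_zero_iff]
  have hyB : y ∈ closedBall 0 1 := by
    rwa [mem_closedBall_zero_iff, hy, ← mem_closedBall_zero_iff]
  obtain ⟨ω, hω, hωy⟩ := exists_reflect_eq hy0 hy
  calc u x = u (reflect ω y) := by rw [hωy]
    _ = -reflect ω (u y) := H ω hω y hyB
    _ = _ := by
      rw [H.eq_smul_perp hyB hy0, reflect_smul, reflect_perp hω, smul_neg, neg_neg,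
        hωy, hy]

/-- For `u` continuous on the closed unit disk, `u` has the form `u x = s(‖x‖) • x^⊥`
(with `u 0 = 0`) if and only if `u (Φ_ω x) = - Φ_ω (u x)` for every unit vector `ω`
and every `x` in the closed disk. -/
theorem stmt2 (u : E2 → E2)
    (hcont : ContinuousOn u (closedBall 0 1)) :
    ((∃ s : ℝ → ℝ, ∀ x ∈ closedBall (0:E2) 1 \ {0}, u x = s ‖x‖ • perp x) ∧ u 0 = 0)
      ↔ (∀ ω : E2, ‖ω‖ = 1 → ∀ x ∈ closedBall (0:E2) 1,
          u (reflect ω x) = - reflect ω (u x)) :=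
  stmt2_general u
end
end

section
/- Let H(t,x,y) := (4πt)^{-1}·exp(−‖x−y‖²/(4t)) and let N(t,x,y) := y·∇_y H(t,x,y) for t > 0. There is a constant C > 0 such that for every t > 0 and every x ∈ S¹, ∫_{S¹} |N(t,x,y)| dσ(y) ≤ C·t^{-1/2}, where σ is arclength measure on the unit circle S¹. -/
open Metric Set MeasureTheory Filter Real
open scoped RealInnerProductSpace MeasureTheory

noncomputable section

/-- The two-dimensional heat kernel `H(t,x,y) = (4πt)⁻¹ exp(-‖x-y‖²/(4t))`. -/
def heatK (t : ℝ) (x y : E2) : ℝ := (4 * π * t)⁻¹ * Real.exp (-‖x - y‖^2 / (4 * t))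

/-- The kernel `N(t,x,y) = y ⬝ ∇_y H(t,x,y)`, the outward normal derivative in `y` of
the heat kernel on the unit circle. -/
def Nker (t : ℝ) (x y : E2) : ℝ := ⟪y, gradient (fun z => heatK t x z) y⟫

/-! On the unit circle `⟪y, x - y⟫ = -‖x - y‖² / 2`, so `N(t,x,y) = -(4πt)⁻¹ u e^{-u}` with
`u = ‖x - y‖² / (4t)`, and `u e^{-u} ≤ e^{-u/2}` gives `|N| ≤ (4πt)⁻¹ exp (-‖x - y‖² / (8t))`.
The map `θ ↦ (cos θ, sin θ)` is `1`-Lipschitz, so the arclength integral is at most the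
`θ`-integral over one period. Centring the period at the angle `φ` of `x`, the chord bound
`‖y(θ) - x‖ ≥ (2/π) |θ - φ|` (Jordan's inequality) dominates the integrand by a Gaussian of
variance `π² t`, whose integral is `√(2π³t)`; altogether `C = √(π/8)`. -/

theorem hasGradientAt_heatK (t : ℝ) (x y : E2) :
    HasGradientAt (heatK t x) (((2 * t)⁻¹ * heatK t x y) • (x - y)) y := by
  have hsq : HasFDerivAt (fun z => ‖x - z‖ ^ 2) (2 • (innerSL ℝ (x - y)).comp
      (-ContinuousLinearMap.id ℝ E2)) y := ((hasFDerivAt_id y).const_sub x).norm_sq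
  have h := ((hsq.const_mul (-(4 * t)⁻¹)).exp).const_mul (4 * π * t)⁻¹
  have hfun : heatK t x = fun z => (4 * π * t)⁻¹ * exp (-(4 * t)⁻¹ * ‖x - z‖ ^ 2) := by
    ext z
    simp only [heatK, div_eq_inv_mul, neg_mul, mul_neg]
  rw [hasGradientAt_iff_hasFDerivAt, hfun]
  refine h.congr_fderiv ?_
  ext w
  simp only [mul_inv_rev, neg_mul, map_sub, ContinuousLinearMap.comp_neg,
    ContinuousLinearMap.comp_id, neg_sub, neg_smul, smul_neg, neg_apply, smul_apply, sub_apply,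
    coe_innerSL_apply, nsmul_eq_mul, Nat.cast_ofNat, smul_eq_mul, map_smul,
    InnerProductSpace.toDual_apply_apply]
  ring

theorem Nker_eq (t : ℝ) (x y : E2) : Nker t x y = (2 * t)⁻¹ * heatK t x y * ⟪y, x - y⟫ := by
  rw [Nker, (hasGradientAt_heatK t x y).gradient, real_inner_smul_right]

theorem inner_sub_eq_neg_half_norm_sub_sq {F : Type*} [NormedAddCommGroup F]
    [InnerProductSpace ℝ F] {x y : F} (h : ‖x‖ = ‖y‖) : ⟪y, x - y⟫ = -(‖x - y‖ ^ 2 / 2) := by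
  rw [inner_sub_right, real_inner_self_eq_norm_sq, norm_sub_sq_real, real_inner_comm, h]
  ring

theorem mul_exp_neg_le_exp_neg_half {u : ℝ} (hu : 0 ≤ u) : u * exp (-u) ≤ exp (-(u / 2)) := by
  have hquad := quadratic_le_exp_of_nonneg (by positivity : 0 ≤ u / 2)
  calc u * exp (-u) ≤ exp (u / 2) * exp (-u) := by
        gcongr
        nlinarith [sq_nonneg (u / 2 - 1)]
    _ = exp (-(u / 2)) := by rw [← exp_add]; ring_nf

theorem abs_Nker_le {t : ℝ} (ht : 0 < t) {x y : E2} (hx : ‖x‖ = 1) (hy : ‖y‖ = 1) :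
    |Nker t x y| ≤ (4 * π * t)⁻¹ * exp (-(8 * t)⁻¹ * ‖x - y‖ ^ 2) := by
  obtain ⟨u, hu0, hu⟩ : ∃ u, 0 ≤ u ∧ ‖x - y‖ ^ 2 = 4 * t * u :=
    ⟨‖x - y‖ ^ 2 / (4 * t), by positivity, by field_simp⟩
  have hN : Nker t x y = -((4 * π * t)⁻¹ * (u * exp (-u))) := by
    rw [Nker_eq, inner_sub_eq_neg_half_norm_sub_sq (hx.trans hy.symm), heatK, hu]
    field_simp
    ring_nf
  rw [hN, abs_neg, abs_of_nonneg (by positivity), hu,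
    show -(8 * t)⁻¹ * (4 * t * u) = -(u / 2) by field_simp; ring]
  gcongr
  exact mul_exp_neg_le_exp_neg_half hu0

section HausdorffParametrization

variable {X : Type*} [EMetricSpace X] [MeasurableSpace X] [BorelSpace X]

theorem LipschitzWith.restrict_hausdorffMeasure_le_map {f : ℝ → X} (hf : LipschitzWith 1 f)
    {s : Set ℝ} {T : Set X} (hT : T ⊆ f '' s) :
    (μH[1] : Measure X).restrict T ≤ (volume.restrict s).map f := by
  refine Measure.le_iff.2 fun A hA => ?_
  rw [Measure.map_apply hf.continuous.measurable hA, Measure.restrict_apply hA,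
    Measure.restrict_apply (hA.preimage hf.continuous.measurable), ← hausdorffMeasure_real]
  calc μH[1] (A ∩ T) ≤ μH[1] (f '' (f ⁻¹' A ∩ s)) :=
        measure_mono ((inter_subset_inter_right A hT).trans (image_preimage_inter f s A).ge)
    _ ≤ μH[1] (f ⁻¹' A ∩ s) := by
        simpa using hf.hausdorffMeasure_image_le zero_le_one (f ⁻¹' A ∩ s)

theorem LipschitzWith.setLIntegral_hausdorffMeasure_le {f : ℝ → X} (hf : LipschitzWith 1 f)
    {s : Set ℝ} {T : Set X} (hT : T ⊆ f '' s) {g : X → ENNReal} (hg : Measurable g) :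
    ∫⁻ y in T, g y ∂μH[1] ≤ ∫⁻ θ in s, g (f θ) :=
  calc ∫⁻ y in T, g y ∂μH[1] ≤ ∫⁻ y, g y ∂(volume.restrict s).map f :=
        lintegral_mono' (hf.restrict_hausdorffMeasure_le_map hT) le_rfl
    _ = ∫⁻ θ in s, g (f θ) := lintegral_map hg hf.continuous.measurable

end HausdorffParametrization

-- `θ ↦ (cos θ, sin θ)`
def circleParam (θ : ℝ) : E2 := Complex.orthonormalBasisOneI.repr (circleMap 0 1 θ)

theorem lipschitzWith_circleParam : LipschitzWith 1 circleParam := by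
  have := Complex.orthonormalBasisOneI.repr.lipschitz.comp (lipschitzWith_circleMap 0 1)
  simp only [Real.nnabs_of_nonneg zero_le_one, Real.toNNReal_one, mul_one] at this
  exact this

theorem periodic_circleParam : Function.Periodic circleParam (2 * π) := fun θ => by
  simp only [circleParam, periodic_circleMap 0 1 θ]

theorem image_circleParam_Ioc : circleParam '' Ioc 0 (2 * π) = sphere 0 1 := by
  rw [show circleParam = Complex.orthonormalBasisOneI.repr ∘ circleMap 0 1 from rfl, image_comp,
    image_circleMap_Ioc, abs_one, LinearIsometryEquiv.image_sphere]
  simp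

theorem norm_circleParam_sub_sq (a b : ℝ) :
    ‖circleParam a - circleParam b‖ ^ 2 = 4 * sin ((a - b) / 2) ^ 2 := by
  rw [circleParam, circleParam, ← map_sub, LinearIsometryEquiv.norm_map, Complex.sq_norm,
    Complex.normSq_apply]
  simp only [Complex.sub_re, Complex.sub_im, circleMap_zero_re, circleMap_zero_im, one_mul]
  have hhalf : cos (a - b) = 1 - 2 * sin ((a - b) / 2) ^ 2 := by
    have h := Real.cos_two_mul ((a - b) / 2)
    rw [mul_div_cancel₀ _ two_ne_zero] at h
    linear_combination h + 2 * Real.cos_sq_add_sin_sq ((a - b) / 2)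
  rw [Real.cos_sub] at hhalf
  linear_combination (-2) * hhalf + Real.cos_sq_add_sin_sq a + Real.cos_sq_add_sin_sq b

theorem mul_sq_le_norm_circleParam_sub_sq {a b : ℝ} (hab : |a - b| ≤ π) :
    4 / π ^ 2 * (a - b) ^ 2 ≤ ‖circleParam a - circleParam b‖ ^ 2 := by
  have hsin : 2 / π * |(a - b) / 2| ≤ |sin ((a - b) / 2)| :=
    mul_abs_le_abs_sin (by rw [abs_div, abs_two]; linarith)
  have hsq := pow_le_pow_left₀ (by positivity) hsin 2
  rw [mul_pow, sq_abs, sq_abs] at hsq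
  rw [norm_circleParam_sub_sq]
  linear_combination 4 * hsq

theorem setIntegral_exp_neg_mul_norm_sub_circleParam_sq_le {b : ℝ} (hb : 0 < b) {x : E2}
    (hx : ‖x‖ = 1) :
    ∫ θ in Ioc 0 (2 * π), exp (-b * ‖x - circleParam θ‖ ^ 2) ≤ √(π ^ 3 / (4 * b)) := by
  obtain ⟨φ, -, rfl⟩ : x ∈ circleParam '' Ioc 0 (2 * π) := by
    rwa [image_circleParam_Ioc, mem_sphere_zero_iff_norm]
  set g : ℝ → ℝ := fun θ => exp (-b * ‖circleParam φ - circleParam θ‖ ^ 2)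
  set G : ℝ → ℝ := fun θ => exp (-(4 * b / π ^ 2) * (θ - φ) ^ 2)
  have hg : Continuous g := by
    have := lipschitzWith_circleParam.continuous
    fun_prop
  have hG : Integrable G :=
    (integrable_exp_neg_mul_sq (by positivity)).comp_sub_right φ
  have hgG : ∀ θ ∈ Icc (φ - π) (φ - π + 2 * π), g θ ≤ G θ := fun θ hθ => by
    have hdist : |φ - θ| ≤ π := abs_le.2 ⟨by linarith [hθ.2], by linarith [hθ.1]⟩
    have := mul_le_mul_of_nonneg_left (mul_sq_le_norm_circleParam_sub_sq hdist) hb.le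
    simp only [g, G, Real.exp_le_exp]
    linear_combination this
  calc ∫ θ in Ioc 0 (2 * π), g θ
      = ∫ θ in (0 : ℝ)..0 + 2 * π, g θ := by
        rw [zero_add, intervalIntegral.integral_of_le Real.two_pi_pos.le]
    _ = ∫ θ in (φ - π)..(φ - π) + 2 * π, g θ :=
        (periodic_circleParam.comp
          fun y => exp (-b * ‖circleParam φ - y‖ ^ 2)).intervalIntegral_add_eq 0 (φ - π)
    _ ≤ ∫ θ in (φ - π)..(φ - π) + 2 * π, G θ :=
        intervalIntegral.integral_mono_on (by linarith [Real.pi_pos])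
          (hg.intervalIntegrable _ _) hG.intervalIntegrable hgG
    _ ≤ ∫ θ, G θ := by
        rw [intervalIntegral.integral_of_le (by linarith [Real.pi_pos])]
        exact setIntegral_le_integral hG (ae_of_all _ fun θ => (Real.exp_pos _).le)
    _ = √(π / (4 * b / π ^ 2)) := by
        rw [integral_sub_right_eq_self (fun θ => exp (-(4 * b / π ^ 2) * θ ^ 2)),
          integral_gaussian]
    _ = √(π ^ 3 / (4 * b)) := by
        congr 1
        field_simp

theorem lintegral_abs_Nker_le {t : ℝ} (ht : 0 < t) {x : E2} (hx : ‖x‖ = 1) :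
    ∫⁻ y in sphere (0 : E2) 1, ENNReal.ofReal |Nker t x y| ∂μH[1] ≤
      ENNReal.ofReal (√(π / 8) * t ^ (-(1 : ℝ) / 2)) := by
  set B : E2 → ℝ := fun y => (4 * π * t)⁻¹ * exp (-(8 * t)⁻¹ * ‖x - y‖ ^ 2)
  have hB : Continuous B := by fun_prop
  have hBcirc : IntegrableOn (fun θ => B (circleParam θ)) (Ioc 0 (2 * π)) :=
    (hB.comp lipschitzWith_circleParam.continuous).integrableOn_Icc.mono_set Ioc_subset_Icc_self
  calc ∫⁻ y in sphere (0 : E2) 1, ENNReal.ofReal |Nker t x y| ∂μH[1]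
      ≤ ∫⁻ y in sphere (0 : E2) 1, ENNReal.ofReal (B y) ∂μH[1] :=
        setLIntegral_mono hB.measurable.ennreal_ofReal fun y hy =>
          ENNReal.ofReal_le_ofReal (abs_Nker_le ht hx (mem_sphere_zero_iff_norm.1 hy))
    _ ≤ ∫⁻ θ in Ioc 0 (2 * π), ENNReal.ofReal (B (circleParam θ)) :=
        lipschitzWith_circleParam.setLIntegral_hausdorffMeasure_le image_circleParam_Ioc.ge
          hB.measurable.ennreal_ofReal
    _ = ENNReal.ofReal (∫ θ in Ioc 0 (2 * π), B (circleParam θ)) :=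
        (ofReal_integral_eq_lintegral_ofReal hBcirc (ae_of_all _ fun θ => by positivity)).symm
    _ ≤ ENNReal.ofReal ((4 * π * t)⁻¹ * √(π ^ 3 / (4 * (8 * t)⁻¹))) := by
        rw [integral_const_mul]
        gcongr
        exact setIntegral_exp_neg_mul_norm_sub_circleParam_sq_le (by positivity) hx
    _ = ENNReal.ofReal (√(π / 8) * t ^ (-(1 : ℝ) / 2)) := by
        have hsplit : π ^ 3 / (4 * (8 * t)⁻¹) = (4 * π * t) ^ 2 * (π / 8) / t := by
          field_simp
          ring
        rw [hsplit, Real.sqrt_div' _ ht.le, Real.sqrt_mul' _ (by positivity),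
          Real.sqrt_sq (by positivity), neg_div, Real.rpow_neg ht.le, ← Real.sqrt_eq_rpow]
        field_simp

/-- There is `C > 0` such that for all `t > 0` and `x ∈ S¹`,
`∫_{S¹} |N(t,x,y)| dσ(y) ≤ C t^{-1/2}`, where `σ` is arclength (one-dimensional
Hausdorff) measure on the unit circle. -/
theorem stmt11 : ∃ C > (0:ℝ), ∀ t > (0:ℝ), ∀ x : E2, ‖x‖ = 1 →
    (∫ y in sphere (0:E2) 1, |Nker t x y| ∂(μH[1])) ≤ C * t ^ (-(1:ℝ)/2) := by
  refine ⟨√(π / 8), by positivity, fun t ht x hx => ?_⟩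
  calc ∫ y in sphere (0 : E2) 1, |Nker t x y| ∂μH[1]
      ≤ (∫⁻ y in sphere (0 : E2) 1, ENNReal.ofReal ‖|Nker t x y|‖ ∂μH[1]).toReal :=
        (Real.le_norm_self _).trans (norm_integral_le_lintegral_norm _)
    _ ≤ (ENNReal.ofReal (√(π / 8) * t ^ (-(1 : ℝ) / 2))).toReal := by
        simp only [Real.norm_eq_abs, abs_abs]
        exact ENNReal.toReal_mono ENNReal.ofReal_ne_top (lintegral_abs_Nker_le ht hx)
    _ = √(π / 8) * t ^ (-(1 : ℝ) / 2) := ENNReal.toReal_ofReal (by positivity)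
end
end

section
/- Let ν > 0 and let ω : (0,∞) × ℝ² → ℝ be such that ω and its first t-derivative and first and second x-derivatives are continuous on (0,∞) × D̄, ω satisfies the heat equation ∂_t ω = ν·Δω on (0,∞) × D, and ω is circularly symmetric: ω(t,x) = ϖ(t,‖x‖) for some function ϖ. Set α(t) := ∫_D ω(t,x) dx. Then α is differentiable on (0,∞) and for every t > 0 and every x with ‖x‖ = 1, the outward normal derivative satisfies x·∇ω(t,x) = α'(t)/(2πν). -/
/-!
In polar coordinates `α(τ) = 2π ∫₀¹ r ω(τ, r e₀) dr`, so differentiating under the integral and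
using the heat equation gives `α'(t) = 2πν ∫₀¹ r Δω(t, r e₀) dr`. For a radial function the
tangential second derivative at `r e₀` equals `∂ᵣω / r` (differentiate the vanishing tangential
derivative once more along the circle of radius `r`), hence `r Δω = (r ∂ᵣω)'`, and the integral
telescopes to `∂ᵣω(t, e₀)`. By symmetry this radial derivative is the same at every boundary point.
-/

open Metric Set MeasureTheory Filter Real
open scoped RealInnerProductSpace MeasureTheory

noncomputable section

local notation "e₀" => (EuclideanSpace.single 0 1 : E2)
local notation "e₁" => (EuclideanSpace.single 1 1 : E2)

theorem setIntegral_ball_fun_norm (g : ℝ → ℝ) (R : ℝ) :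
    ∫ y in ball (0:E2) R, g ‖y‖ = 2 * π * ∫ r in Ioo 0 R, r * g r := by
  have hind : (ball (0:E2) R).indicator (fun y => g ‖y‖) = fun y => (Iio R).indicator g ‖y‖ := by
    ext y
    by_cases h : ‖y‖ < R <;> simp [indicator, h]
  have hradial : (fun r : ℝ => r ^ (Module.finrank ℝ E2 - 1) • (Iio R).indicator g r)
      = (Iio R).indicator (fun r => r * g r) := by
    ext r
    by_cases h : r < R <;> simp [indicator, h, finrank_euclideanSpace]
  rw [← integral_indicator measurableSet_ball, hind, integral_fun_norm_addHaar, hradial,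
    integral_indicator measurableSet_Iio, Measure.restrict_restrict measurableSet_Iio,
    Iio_inter_Ioi, measureReal_def, EuclideanSpace.volume_ball_fin_two, finrank_euclideanSpace]
  simp only [Fintype.card_fin, ENNReal.ofReal_one, one_pow, one_mul, pi_nonneg,
    ENNReal.toReal_ofReal, smul_eq_mul, nsmul_eq_mul, Nat.cast_ofNat]
  ring

theorem smul_mem_closedBall_of_mem_Icc {E : Type*} [NormedAddCommGroup E] [NormedSpace ℝ E]
    {u : E} (hu : ‖u‖ = 1) {r : ℝ} (hr : r ∈ Icc 0 1) : r • u ∈ closedBall (0:E) 1 := by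
  simpa [norm_smul, hu, abs_of_nonneg hr.1] using hr.2

theorem setIntegral_ball_eq_of_radial {f : E2 → ℝ} {g : ℝ → ℝ}
    (hfg : ∀ y ∈ closedBall (0:E2) 1, f y = g ‖y‖) {u : E2} (hu : ‖u‖ = 1) :
    ∫ y in ball (0:E2) 1, f y = 2 * π * ∫ r in (0:ℝ)..1, r * f (r • u) := by
  have hprofile : EqOn (fun r => r * g r) (fun r => r * f (r • u)) (Ioo 0 1) := fun r hr => by
    dsimp only
    rw [hfg _ (smul_mem_closedBall_of_mem_Icc hu (Ioo_subset_Icc_self hr)), norm_smul, hu,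
      mul_one, Real.norm_of_nonneg hr.1.le]
  rw [setIntegral_congr_fun (g := fun y => g ‖y‖) measurableSet_ball
      fun y hy => hfg y (ball_subset_closedBall hy),
    setIntegral_ball_fun_norm, setIntegral_congr_fun measurableSet_Ioo hprofile,
    intervalIntegral.integral_of_le zero_le_one, integral_Ioc_eq_integral_Ioo]

theorem hasDerivAt_intervalIntegral_of_continuousOn {E : Type*} [NormedAddCommGroup E]
    [NormedSpace ℝ E] {f f' : ℝ → ℝ → E} {t ε a b : ℝ} (hε : 0 < ε)
    (hf : ∀ τ ∈ ball t ε, ContinuousOn (f τ) (uIcc a b))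
    (hf' : ContinuousOn (Function.uncurry f') (closedBall t ε ×ˢ uIcc a b))
    (hderiv : ∀ τ ∈ ball t ε, ∀ r ∈ uIcc a b, HasDerivAt (f · r) (f' τ r) τ) :
    HasDerivAt (fun τ => ∫ r in a..b, f τ r) (∫ r in a..b, f' t r) t := by
  obtain ⟨C, hC⟩ :=
    ((isCompact_closedBall t ε).prod isCompact_uIcc).exists_bound_of_continuousOn hf'
  have hf't : ContinuousOn (f' t) (uIcc a b) :=
    hf'.comp (Continuous.prodMk_right t).continuousOn
      fun r hr => ⟨mem_closedBall_self hε.le, hr⟩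
  refine (intervalIntegral.hasDerivAt_integral_of_dominated_loc_of_deriv_le
    (bound := fun _ => C) (ball_mem_nhds t hε) ?_
    (hf t (mem_ball_self hε)).intervalIntegrable
    ((hf't.mono uIoc_subset_uIcc).aestronglyMeasurable measurableSet_uIoc)
    (ae_of_all _ fun r hr τ hτ => hC (τ, r) ⟨ball_subset_closedBall hτ, uIoc_subset_uIcc hr⟩)
    intervalIntegrable_const
    (ae_of_all _ fun r hr τ hτ => hderiv τ hτ r (uIoc_subset_uIcc hr))).2
  filter_upwards [ball_mem_nhds t hε] with τ hτ
  exact ((hf τ hτ).mono uIoc_subset_uIcc).aestronglyMeasurable measurableSet_uIoc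

theorem hasDerivAt_integral_mul_along_ray {E : Type*} [NormedAddCommGroup E] [NormedSpace ℝ E]
    {ω ωt : ℝ → E → ℝ} {u : E} (hu : ‖u‖ = 1) {t : ℝ} (ht : 0 < t)
    (hω : ∀ τ ∈ Ioi (0:ℝ), ContinuousOn (ω τ) (closedBall 0 1))
    (hωt : ∀ τ ∈ Ioi (0:ℝ), ∀ y ∈ closedBall (0:E) 1, HasDerivAt (fun τ => ω τ y) (ωt τ y) τ)
    (hωtc : ContinuousOn (fun p : ℝ × E => ωt p.1 p.2) (Ioi 0 ×ˢ closedBall 0 1)) :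
    HasDerivAt (fun τ => ∫ r in (0:ℝ)..1, r * ω τ (r • u))
      (∫ r in (0:ℝ)..1, r * ωt t (r • u)) t := by
  have hpos : closedBall t (t / 2) ⊆ Ioi 0 := fun τ hτ => by
    rw [mem_closedBall, Real.dist_eq, abs_le] at hτ
    show 0 < τ
    linarith
  have hray : MapsTo (fun r : ℝ => r • u) (uIcc 0 1) (closedBall 0 1) := fun r hr =>
    smul_mem_closedBall_of_mem_Icc hu (by rwa [uIcc_of_le zero_le_one] at hr)
  refine hasDerivAt_intervalIntegral_of_continuousOn (f := fun τ r => r * ω τ (r • u))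
    (f' := fun τ r => r * ωt τ (r • u)) (half_pos ht) (fun τ hτ => ?_) ?_
    (fun τ hτ r hr => ?_)
  · exact continuousOn_id.mul
      ((hω τ (hpos (ball_subset_closedBall hτ))).comp (by fun_prop) hray)
  · refine continuousOn_snd.mul
      (hωtc.comp (f := fun p : ℝ × ℝ => (p.1, p.2 • u)) (by fun_prop) fun p hp => ?_)
    exact ⟨hpos hp.1, hray hp.2⟩
  · exact (hωt τ (hpos (ball_subset_closedBall hτ)) _ (hray hr)).const_mul r

theorem norm_cos_smul_add_sin_smul {E : Type*} [NormedAddCommGroup E] [InnerProductSpace ℝ E]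
    {u v : E} (hu : ‖u‖ = 1) (hv : ‖v‖ = 1) (huv : ⟪u, v⟫ = 0) (θ : ℝ) :
    ‖Real.cos θ • u + Real.sin θ • v‖ = 1 := by
  have hsq : ‖Real.cos θ • u + Real.sin θ • v‖ ^ 2 = 1 := by
    rw [norm_add_sq_real, norm_smul, norm_smul, real_inner_smul_left, real_inner_smul_right,
      huv, hu, hv, Real.norm_eq_abs, Real.norm_eq_abs]
    nlinarith [sq_abs (Real.cos θ), sq_abs (Real.sin θ), Real.sin_sq_add_cos_sq θ]
  exact (pow_eq_one_iff_of_nonneg (norm_nonneg _) two_ne_zero).1 hsq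

theorem mul_hessian_tangent_eq_of_const_on_sphere {E : Type*} [NormedAddCommGroup E]
    [InnerProductSpace ℝ E] {f : E → ℝ} {Df : E → E →L[ℝ] ℝ} {D2f : E →L[ℝ] E →L[ℝ] ℝ}
    {u v : E} (hu : ‖u‖ = 1) (hv : ‖v‖ = 1) (huv : ⟪u, v⟫ = 0) {r : ℝ} (hr : 0 < r)
    (hconst : ∀ y ∈ sphere (0:E) r, f y = f (r • u))
    (hDf : ∀ y ∈ sphere (0:E) r, HasFDerivAt f (Df y) y)
    (hD2f : HasFDerivAt Df D2f (r • u)) :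
    r * D2f v v = Df (r • u) u := by
  set c : ℝ → E := fun θ => r • (Real.cos θ • u + Real.sin θ • v) with hc
  set c' : ℝ → E := fun θ => r • (-Real.sin θ • u + Real.cos θ • v) with hc'
  have hc_sphere : ∀ θ, c θ ∈ sphere (0:E) r := fun θ => by
    rw [mem_sphere_zero_iff_norm, hc, norm_smul, norm_cos_smul_add_sin_smul hu hv huv,
      Real.norm_of_nonneg hr.le, mul_one]
  have hc_deriv : ∀ θ, HasDerivAt c (c' θ) θ := fun θ =>
    (((Real.hasDerivAt_cos θ).smul_const u).add
      ((Real.hasDerivAt_sin θ).smul_const v)).const_smul r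
  have hc'_deriv : HasDerivAt c' (r • (-Real.cos 0 • u + -Real.sin 0 • v)) 0 :=
    (((Real.hasDerivAt_sin 0).neg.smul_const u).add
      ((Real.hasDerivAt_cos 0).smul_const v)).const_smul r
  have htangent : ∀ θ, Df (c θ) (c' θ) = 0 := fun θ => by
    have h := (hDf _ (hc_sphere θ)).comp_hasDerivAt θ (hc_deriv θ)
    rw [show f ∘ c = fun _ => f (r • u) from funext fun θ => hconst _ (hc_sphere θ)] at h
    exact h.unique (hasDerivAt_const θ _)
  have hc0 : c 0 = r • u := by simp [hc]
  have h2 : HasDerivAt (fun θ => Df (c θ) (c' θ))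
      (D2f (c' 0) (c' 0) + Df (c 0) (r • (-Real.cos 0 • u + -Real.sin 0 • v))) 0 :=
    ((hc0 ▸ hD2f).comp_hasDerivAt 0 (hc_deriv 0)).clm_apply hc'_deriv
  rw [funext htangent] at h2
  -- `c' 0 = r • v` and `c'' 0 = -(r • u)`, so this reads `r² D2f v v - r Df (r • u) u = 0`
  have h0 := (hasDerivAt_const (0:ℝ) (0:ℝ)).unique h2
  simp only [hc', neg_smul, smul_add, smul_neg, sin_zero, zero_smul, smul_zero, neg_zero, cos_zero,
    one_smul, zero_add, map_smul, smul_apply, smul_eq_mul, hc0, add_zero,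
    map_neg] at h0
  exact mul_left_cancel₀ hr.ne' (by linarith)

theorem hasDerivAt_mul_radialDeriv_of_const_on_sphere {f : E2 → ℝ} {Df : E2 → E2 →L[ℝ] ℝ}
    {D2f : E2 →L[ℝ] E2 →L[ℝ] ℝ} {r : ℝ} (hr : 0 < r)
    (hconst : ∀ y ∈ sphere (0:E2) r, f y = f (r • e₀))
    (hDf : ∀ y ∈ sphere (0:E2) r, HasFDerivAt f (Df y) y)
    (hD2f : HasFDerivAt Df D2f (r • e₀)) :
    HasDerivAt (fun s => s * Df (s • e₀) e₀) (r * (D2f e₀ e₀ + D2f e₁ e₁)) r := by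
  have htangent : r * D2f e₁ e₁ = Df (r • e₀) e₀ :=
    mul_hessian_tangent_eq_of_const_on_sphere (u := e₀) (v := e₁) (by simp) (by simp)
      (by simp [EuclideanSpace.inner_single_left]) hr hconst hDf hD2f
  have hradial : HasDerivAt (fun s : ℝ => Df (s • e₀) e₀) (D2f e₀ e₀) r := by
    have hline : HasDerivAt (fun s : ℝ => s • e₀) e₀ r := by
      simpa using (hasDerivAt_id r).smul_const e₀
    have hcomp : HasDerivAt (fun s : ℝ => Df (s • e₀)) (D2f e₀) r := hD2f.comp_hasDerivAt r hline
    simpa using hcomp.clm_apply (hasDerivAt_const r e₀)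
  exact ((hasDerivAt_id' r).mul hradial).congr_deriv (by rw [← htangent]; ring)

theorem integral_mul_heat_eq_flux_of_radial {f ft : E2 → ℝ} {g : ℝ → ℝ}
    {Df : E2 → E2 →L[ℝ] ℝ} {D2f : E2 → E2 →L[ℝ] E2 →L[ℝ] ℝ} {ν : ℝ}
    (hfg : ∀ y ∈ closedBall (0:E2) 1, f y = g ‖y‖)
    (hDf : ∀ y ∈ closedBall (0:E2) 1, HasFDerivWithinAt f (Df y) (closedBall 0 1) y)
    (hD2f : ∀ y ∈ closedBall (0:E2) 1, HasFDerivWithinAt Df (D2f y) (closedBall 0 1) y)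
    (hft : ContinuousOn ft (closedBall 0 1))
    (hheat : ∀ y ∈ ball (0:E2) 1, ft y = ν * (D2f y e₀ e₀ + D2f y e₁ e₁)) :
    ∫ r in (0:ℝ)..1, r * ft (r • e₀) = ν * Df e₀ e₀ := by
  have hmem : MapsTo (fun r : ℝ => r • e₀) (Icc 0 1) (closedBall 0 1) := fun r hr =>
    smul_mem_closedBall_of_mem_Icc (by simp) hr
  have hline : Continuous (fun r : ℝ => r • e₀) := by fun_prop
  have hDf_cont : ContinuousOn Df (closedBall 0 1) := fun y hy => (hD2f y hy).continuousWithinAt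
  have hflux : ∀ r ∈ Ioo (0:ℝ) 1,
      HasDerivAt (fun s => ν * (s * Df (s • e₀) e₀)) (r * ft (r • e₀)) r := by
    intro r hr
    have hsphere : sphere (0:E2) r ⊆ ball 0 1 := sphere_subset_ball hr.2
    have hre₀ : r • e₀ ∈ sphere (0:E2) r := by simp [norm_smul, abs_of_pos hr.1]
    have hconst : ∀ y ∈ sphere (0:E2) r, f y = f (r • e₀) := fun y hy => by
      rw [hfg y (ball_subset_closedBall (hsphere hy)),
        hfg _ (ball_subset_closedBall (hsphere hre₀)), mem_sphere_zero_iff_norm.1 hy,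
        mem_sphere_zero_iff_norm.1 hre₀]
    have hDf' : ∀ y ∈ sphere (0:E2) r, HasFDerivAt f (Df y) y := fun y hy =>
      (hDf y (ball_subset_closedBall (hsphere hy))).hasFDerivAt
        (closedBall_mem_nhds_of_mem (hsphere hy))
    have hD2f' : HasFDerivAt Df (D2f (r • e₀)) (r • e₀) :=
      (hD2f _ (ball_subset_closedBall (hsphere hre₀))).hasFDerivAt
        (closedBall_mem_nhds_of_mem (hsphere hre₀))
    rw [hheat _ (hsphere hre₀), mul_left_comm]
    exact (hasDerivAt_mul_radialDeriv_of_const_on_sphere hr.1 hconst hDf' hD2f').const_mul ν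
  have hint : IntervalIntegrable (fun r : ℝ => r * ft (r • e₀)) volume 0 1 :=
    (continuousOn_id.mul (hft.comp hline.continuousOn hmem)).intervalIntegrable_of_Icc
      zero_le_one
  have hcont : ContinuousOn (fun s : ℝ => ν * (s * Df (s • e₀) e₀)) (Icc 0 1) :=
    continuousOn_const.mul (continuousOn_id.mul
      ((hDf_cont.comp hline.continuousOn hmem).clm_apply continuousOn_const))
  simpa using intervalIntegral.integral_eq_sub_of_hasDerivAt_of_le zero_le_one hcont hflux hint

theorem normalDeriv_eq_of_radial {E : Type*} [NormedAddCommGroup E] [NormedSpace ℝ E]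
    {f : E → ℝ} {g : ℝ → ℝ} {Df : E → E →L[ℝ] ℝ}
    (hfg : ∀ y ∈ closedBall (0:E) 1, f y = g ‖y‖)
    (hDf : ∀ y ∈ sphere (0:E) 1, HasFDerivWithinAt f (Df y) (closedBall 0 1) y)
    {x y : E} (hx : ‖x‖ = 1) (hy : ‖y‖ = 1) : Df x x = Df y y := by
  have hradial : ∀ z : E, ‖z‖ = 1 → HasDerivWithinAt g (Df z z) (Icc 0 1) 1 := by
    intro z hz
    have hmaps : MapsTo (fun s : ℝ => s • z) (Icc 0 1) (closedBall 0 1) := fun _ hs =>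
      smul_mem_closedBall_of_mem_Icc hz hs
    have hline : HasDerivWithinAt (fun s : ℝ => s • z) z (Icc 0 1) 1 := by
      simpa using ((hasDerivAt_id (1:ℝ)).smul_const z).hasDerivWithinAt
    have hcomp := (hDf z (mem_sphere_zero_iff_norm.2 hz)).comp_hasDerivWithinAt_of_eq 1 hline
      hmaps (one_smul ℝ z).symm
    refine hcomp.congr (fun s hs => ?_) ?_
    · rw [Function.comp_apply, hfg _ (hmaps hs), norm_smul, hz, mul_one,
        Real.norm_of_nonneg hs.1]
    · rw [Function.comp_apply, one_smul, hfg z (by simp [hz]), hz]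
  exact ((uniqueDiffOn_Icc zero_lt_one) 1 (right_mem_Icc.2 zero_le_one)).eq_deriv _
    (hradial x hx) (hradial y hy)

theorem stmt17_general (ν : ℝ)
    (ω : ℝ → E2 → ℝ) (ϖ : ℝ → ℝ → ℝ)
    (ωt : ℝ → E2 → ℝ) (Dω : ℝ → E2 → (E2 →L[ℝ] ℝ))
    (D2ω : ℝ → E2 → (E2 →L[ℝ] E2 →L[ℝ] ℝ))
    (hωt : ∀ t ∈ Ioi (0:ℝ), ∀ x ∈ closedBall (0:E2) 1,
      HasDerivAt (fun τ => ω τ x) (ωt t x) t)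
    (hωtc : ContinuousOn (fun p : ℝ × E2 => ωt p.1 p.2) (Ioi 0 ×ˢ closedBall 0 1))
    (hDω : ∀ t ∈ Ioi (0:ℝ), ∀ x ∈ closedBall (0:E2) 1,
      HasFDerivWithinAt (ω t) (Dω t x) (closedBall 0 1) x)
    (hD2ω : ∀ t ∈ Ioi (0:ℝ), ∀ x ∈ closedBall (0:E2) 1,
      HasFDerivWithinAt (Dω t) (D2ω t x) (closedBall 0 1) x)
    (hheat : ∀ t ∈ Ioi (0:ℝ), ∀ x ∈ ball (0:E2) 1,
      ωt t x = ν * (D2ω t x (EuclideanSpace.single 0 1) (EuclideanSpace.single 0 1)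
        + D2ω t x (EuclideanSpace.single 1 1) (EuclideanSpace.single 1 1)))
    (hsym : ∀ t ∈ Ioi (0:ℝ), ∀ x ∈ closedBall (0:E2) 1, ω t x = ϖ t ‖x‖) :
    ∀ t ∈ Ioi (0:ℝ), ∀ x : E2, ‖x‖ = 1 →
      HasDerivAt (fun τ => ∫ y in ball (0:E2) 1, ω τ y) (2 * π * ν * Dω t x x) t := by
  intro t ht x hx
  have hderiv := hasDerivAt_integral_mul_along_ray (u := e₀) (by simp) ht
    (fun τ hτ y hy => (hDω τ hτ y hy).continuousWithinAt) hωt hωtc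
  have hflux : ∫ r in (0:ℝ)..1, r * ωt t (r • e₀) = ν * Dω t e₀ e₀ :=
    integral_mul_heat_eq_flux_of_radial (hsym t ht) (hDω t ht) (hD2ω t ht)
      (hωtc.comp (Continuous.prodMk_right t).continuousOn fun _ hy => ⟨ht, hy⟩) (hheat t ht)
  have hnormal : Dω t x x = Dω t e₀ e₀ :=
    normalDeriv_eq_of_radial (hsym t ht)
      (fun y hy => hDω t ht y (sphere_subset_closedBall hy)) hx (by simp)
  rw [hnormal, mul_assoc _ ν, ← hflux]
  exact (hderiv.const_mul (2 * π)).congr_of_eventuallyEq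
    (eventually_of_mem (Ioi_mem_nhds ht) fun τ hτ =>
      setIntegral_ball_eq_of_radial (hsym τ hτ) (by simp))

/-- For a circularly symmetric solution `ω` of the heat equation `∂_t ω = ν Δω` on the
unit disk, with `ω`, `∂_t ω`, and the first and second space derivatives continuous on
`(0,∞) × D̄`, the quantity `α(t) = ∫_D ω(t,x) dx` is differentiable in `t > 0` and the
outward normal derivative on the boundary satisfies `x ⬝ ∇ω(t,x) = α'(t)/(2πν)` for
`‖x‖ = 1`; equivalently `α` has derivative `2πν (x ⬝ ∇ω(t,x))` at `t`. -/
theorem stmt17 (ν : ℝ) (hν : 0 < ν)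
    (ω : ℝ → E2 → ℝ) (ϖ : ℝ → ℝ → ℝ)
    (ωt : ℝ → E2 → ℝ) (Dω : ℝ → E2 → (E2 →L[ℝ] ℝ))
    (D2ω : ℝ → E2 → (E2 →L[ℝ] E2 →L[ℝ] ℝ))
    (hcont : ContinuousOn (fun p : ℝ × E2 => ω p.1 p.2) (Ioi 0 ×ˢ closedBall 0 1))
    (hωt : ∀ t ∈ Ioi (0:ℝ), ∀ x ∈ closedBall (0:E2) 1,
      HasDerivAt (fun τ => ω τ x) (ωt t x) t)
    (hωtc : ContinuousOn (fun p : ℝ × E2 => ωt p.1 p.2) (Ioi 0 ×ˢ closedBall 0 1))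
    (hDω : ∀ t ∈ Ioi (0:ℝ), ∀ x ∈ closedBall (0:E2) 1,
      HasFDerivWithinAt (ω t) (Dω t x) (closedBall 0 1) x)
    (hDωc : ContinuousOn (fun p : ℝ × E2 => Dω p.1 p.2) (Ioi 0 ×ˢ closedBall 0 1))
    (hD2ω : ∀ t ∈ Ioi (0:ℝ), ∀ x ∈ closedBall (0:E2) 1,
      HasFDerivWithinAt (Dω t) (D2ω t x) (closedBall 0 1) x)
    (hD2ωc : ContinuousOn (fun p : ℝ × E2 => D2ω p.1 p.2) (Ioi 0 ×ˢ closedBall 0 1))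
    (hheat : ∀ t ∈ Ioi (0:ℝ), ∀ x ∈ ball (0:E2) 1,
      ωt t x = ν * (D2ω t x (EuclideanSpace.single 0 1) (EuclideanSpace.single 0 1)
        + D2ω t x (EuclideanSpace.single 1 1) (EuclideanSpace.single 1 1)))
    (hsym : ∀ t ∈ Ioi (0:ℝ), ∀ x ∈ closedBall (0:E2) 1, ω t x = ϖ t ‖x‖) :
    ∀ t ∈ Ioi (0:ℝ), ∀ x : E2, ‖x‖ = 1 →
      HasDerivAt (fun τ => ∫ y in ball (0:E2) 1, ω τ y) (2 * π * ν * Dω t x x) t :=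
  stmt17_general ν ω ϖ ωt Dω D2ω hωt hωtc hDω hD2ω hheat hsym
end
end
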